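/- Let η ∈ [0,1], let ρ, σ be density matrices on n qubits, and let B ⊆ [n]. Then D(E_η^{⊗n}(ρ)|_B, E_η^{⊗n}(σ)|_B) ≤ Σ_{A ⊆ B} η^{|B|-|A|} (1-η)^{|A|} · D(ρ|_A, σ|_A). -/

import Mathlib

open scoped ComplexOrder

noncomputable section

/-- The state space of `n` qubits: linear operators on `(ℂ²)^{⊗ n}`,
represented as matrices indexed by `Fin n → Fin 2`. -/
abbrev QState (n : ℕ) := Matrix (Fin n → Fin 2) (Fin n → Fin 2) ℂ

/-- A density matrix: Hermitian (implied), positive semidefinite, trace one. -/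
def IsDensityMatrix {α : Type*} [Fintype α] (ρ : Matrix α α ℂ) : Prop :=
  ρ.PosSemidef ∧ ρ.trace = 1

/-- The trace norm of a matrix: `tr √(Aᴴ A)`, the sum of the singular values. -/
noncomputable def traceNorm {α : Type*} [Fintype α] [DecidableEq α] (A : Matrix α α ℂ) : ℝ :=
  ((Matrix.posSemidef_conjTranspose_mul_self A).1.eigenvectorUnitary.1 *
      Matrix.diagonal (((↑) : ℝ → ℂ) ∘ (√·) ∘ (Matrix.posSemidef_conjTranspose_mul_self A).1.eigenvalues) *
      (star (Matrix.posSemidef_conjTranspose_mul_self A).1.eigenvectorUnitary : Matrix α α ℂ)).trace.re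

/-- The trace distance `D(ρ,σ) = ‖ρ - σ‖_tr / 2`. -/
noncomputable def traceDist {α : Type*} [Fintype α] [DecidableEq α] (ρ σ : Matrix α α ℂ) : ℝ :=
  traceNorm (ρ - σ) / 2

/-- The extension `T ⊗ id_γ` of a linear map on matrices, acting blockwise. -/
def tensorIdMap {α β γ : Type*} (T : Matrix α α ℂ →ₗ[ℂ] Matrix β β ℂ)
    (M : Matrix (α × γ) (α × γ) ℂ) : Matrix (β × γ) (β × γ) ℂ :=
  Matrix.of fun p q => T (Matrix.of fun a a' => M (a, p.2) (a', q.2)) p.1 q.1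

/-- Complete positivity: all the extensions `T ⊗ id_m` preserve positive semidefiniteness. -/
def IsCompletelyPositive {α β : Type*} [Fintype α] [Fintype β]
    (T : Matrix α α ℂ →ₗ[ℂ] Matrix β β ℂ) : Prop :=
  ∀ (m : ℕ) (M : Matrix (α × Fin m) (α × Fin m) ℂ),
    M.PosSemidef → (tensorIdMap T M).PosSemidef

/-- A quantum operation: a trace-preserving, completely positive linear map. -/
def IsQuantumOp {α β : Type*} [Fintype α] [Fintype β]
    (T : Matrix α α ℂ →ₗ[ℂ] Matrix β β ℂ) : Prop :=
  (∀ M, (T M).trace = M.trace) ∧ IsCompletelyPositive T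

/-- The depolarizing channel at rate `η` on `d × d` matrices:
`ρ ↦ (1-η) ρ + (η tr ρ / dim) I`. -/
noncomputable def depolarize (η : ℝ) (d : Type*) [Fintype d] [DecidableEq d] :
    Matrix d d ℂ →ₗ[ℂ] Matrix d d ℂ :=
  (1 - η : ℂ) • LinearMap.id +
    (Matrix.traceLinearMap d ℂ ℂ).smulRight (((η : ℂ) / (Fintype.card d : ℂ)) • (1 : Matrix d d ℂ))

/-- Depolarization at rate `η` of the single qubit `i` of an `n`-qubit system. -/
noncomputable def depolarizeAt (η : ℝ) {n : ℕ} (i : Fin n) : QState n →ₗ[ℂ] QState n where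
  toFun ρ := Matrix.of fun x y =>
    (1 - η : ℂ) * ρ x y +
      (η : ℂ) * (if x i = y i then
        (2 : ℂ)⁻¹ * ∑ b : Fin 2, ρ (Function.update x i b) (Function.update y i b) else 0)
  map_add' ρ σ := by
    ext x y
    simp only [Matrix.of_apply, Matrix.add_apply]
    split
    · rw [Finset.sum_add_distrib]; ring
    · ring
  map_smul' c ρ := by
    ext x y
    simp only [Matrix.of_apply, Matrix.smul_apply, smul_eq_mul, RingHom.id_apply]
    split
    · rw [← Finset.mul_sum]; ring
    · ring

/-- `E_η^{⊗n}`: independent depolarization at rate `η` of each of the `n` qubits. -/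
noncomputable def depolarizeN (η : ℝ) (n : ℕ) : QState n →ₗ[ℂ] QState n :=
  (List.finRange n).foldr (fun i acc => depolarizeAt η i ∘ₗ acc) LinearMap.id

/-- `glue A x z` is the bit string on `n` qubits equal to `x` on `A` and `z` outside `A`. -/
def glue {n : ℕ} (A : Finset (Fin n)) (x : A → Fin 2) (z : {i : Fin n // i ∉ A} → Fin 2) :
    Fin n → Fin 2 :=
  fun i => if h : i ∈ A then x ⟨i, h⟩ else z ⟨i, h⟩

/-- `ptr A ρ = ρ|_A`: the partial trace of an `n`-qubit state over all the qubits outside `A`. -/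
noncomputable def ptr {n : ℕ} (A : Finset (Fin n)) (ρ : QState n) :
    Matrix (A → Fin 2) (A → Fin 2) ℂ :=
  Matrix.of fun x y => ∑ z : ({i : Fin n // i ∉ A} → Fin 2), ρ (glue A x z) (glue A y z)

/-- Given a partition of the qubits `[N]` into the fibers of `f : Fin N → Fin w` and matrices
`M ν` on the blocks, `assemble f M` is the tensor product matrix `⊗_ν M ν` on all `N` qubits. -/
def assemble {N w : ℕ} (f : Fin N → Fin w)
    (M : ∀ ν : Fin w,
      Matrix ({i : Fin N // f i = ν} → Fin 2) ({i : Fin N // f i = ν} → Fin 2) ℂ) :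
    QState N :=
  Matrix.of fun x y => ∏ ν : Fin w, M ν (fun j => x j.1) (fun j => y j.1)

/-- `T` decomposes as the tensor product `⊗_ν Tb ν` of quantum gates of fan-in `≤ k`, with
respect to the partitions of the input qubits `[N]` into the fibers `K_ν` of `f` and of the
output qubits `[N']` into the fibers `L_ν` of `g`. -/
def IsGateDecomp {N N' w : ℕ} (k : ℕ) (T : QState N →ₗ[ℂ] QState N')
    (f : Fin N → Fin w) (g : Fin N' → Fin w)
    (Tb : ∀ ν : Fin w,
      Matrix ({i : Fin N // f i = ν} → Fin 2) ({i : Fin N // f i = ν} → Fin 2) ℂ →ₗ[ℂ]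
        Matrix ({i : Fin N' // g i = ν} → Fin 2) ({i : Fin N' // g i = ν} → Fin 2) ℂ) : Prop :=
  (∀ ν, IsQuantumOp (Tb ν)) ∧
  (∀ ν : Fin w, Fintype.card {i : Fin N // f i = ν} ≤ k) ∧
  (∀ M, T (assemble f M) = assemble g fun ν => Tb ν (M ν))

/-- A quantum circuit over the gate set `G_k` of all quantum gates of fan-in `≤ k`:
a sequence of `depth` levels, with `nq i` qubits at level `i`, where each level operation
decomposes as a tensor product of quantum gates of fan-in `≤ k`. -/
structure QCircuit (k : ℕ) where
  depth : ℕ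
  nq : Fin (depth + 1) → ℕ
  op : ∀ i : Fin depth, QState (nq i.castSucc) →ₗ[ℂ] QState (nq i.succ)
  isGate : ∀ i : Fin depth, ∃ (w : ℕ) (f : Fin (nq i.castSucc) → Fin w)
    (g : Fin (nq i.succ) → Fin w)
    (Tb : ∀ ν : Fin w,
      Matrix ({j : Fin (nq i.castSucc) // f j = ν} → Fin 2)
          ({j : Fin (nq i.castSucc) // f j = ν} → Fin 2) ℂ →ₗ[ℂ]
        Matrix ({j : Fin (nq i.succ) // g j = ν} → Fin 2)
          ({j : Fin (nq i.succ) // g j = ν} → Fin 2) ℂ),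
    IsGateDecomp k (op i) f g Tb

/-- The width of a circuit: the maximum number of qubits at any level. -/
def QCircuit.width {k : ℕ} (Q : QCircuit k) : ℕ := Finset.univ.sup Q.nq

/-- The first `i` levels of the perturbed circuit `Q_η`: the gates `T_0, …, T_{i-1}` interlaced
with depolarizing noise at rate `η` on every qubit between consecutive gates. -/
noncomputable def QCircuit.runP {k : ℕ} (Q : QCircuit k) (η : ℝ) :
    (i : ℕ) → (h : i ≤ Q.depth) →
      (QState (Q.nq ⟨0, Nat.succ_pos _⟩) →ₗ[ℂ] QState (Q.nq ⟨i, Nat.lt_succ_of_le h⟩))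
  | 0, _ => LinearMap.id
  | (i + 1), h =>
      Q.op ⟨i, h⟩ ∘ₗ
        (if i = 0 then LinearMap.id
          else depolarizeN η (Q.nq ⟨i, Nat.lt_succ_of_le (Nat.le_of_succ_le h)⟩)) ∘ₗ
        Q.runP η i (Nat.le_of_succ_le h)

/-- The perturbed circuit `Q_η = T_{t-1} ∘ E_η^{⊗n_{t-1}} ∘ ⋯ ∘ E_η^{⊗n_1} ∘ T_0`. -/
noncomputable def QCircuit.perturbed {k : ℕ} (Q : QCircuit k) (η : ℝ) :
    QState (Q.nq ⟨0, Nat.succ_pos _⟩) →ₗ[ℂ] QState (Q.nq (Fin.last Q.depth)) :=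
  Q.runP η Q.depth le_rfl

end

/-!
Pushing the partial trace `ptr B` through the single-qubit channels `E_η = (1 - η) id + η Φ_i`,
with `Φ_i` the complete depolarization of qubit `i`, removes the channels acting outside `B` and
turns the others into the same channels on the qubits `B`. Expanding the product gives
`E_η^{⊗n}(ρ)|_B = ∑_{A ⊆ B} η^{|B|-|A|} (1-η)^{|A|} Φ_{B∖A}(ρ|_B)`, and
`Φ_{B∖A}(ρ|_B) = ρ|_A ⊗ I / 2^{|B∖A|}` has the trace norm of `ρ|_A`. The bound follows from the
triangle inequality for the trace norm of Hermitian matrices: in an eigenbasis of `X + Y`, the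
diagonals of `X` and `Y` are averages of their eigenvalues by the doubly stochastic matrix of the
squared moduli of a change of basis.
-/

open Matrix
open scoped MatrixOrder Kronecker

theorem Matrix.IsHermitian.kronecker {α β R : Type*} [CommSemiring R] [StarRing R]
    {A : Matrix α α R} {B : Matrix β β R} (hA : A.IsHermitian) (hB : B.IsHermitian) :
    (A ⊗ₖ B).IsHermitian := by
  rw [IsHermitian, conjTranspose_kronecker, hA.eq, hB.eq]

noncomputable def maxMixed (β : Type*) [Fintype β] [DecidableEq β] : Matrix β β ℂ :=
  (Fintype.card β : ℝ)⁻¹ • 1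

theorem posSemidef_maxMixed (β : Type*) [Fintype β] [DecidableEq β] :
    (maxMixed β).PosSemidef :=
  PosSemidef.one.smul (by positivity)

theorem trace_maxMixed (β : Type*) [Fintype β] [DecidableEq β] [Nonempty β] :
    (maxMixed β).trace = 1 := by
  rw [maxMixed, trace_smul, trace_one, Complex.real_smul, Complex.ofReal_inv,
    Complex.ofReal_natCast, inv_mul_cancel₀ (Nat.cast_ne_zero.mpr Fintype.card_ne_zero)]

section TraceNorm

variable {α β : Type*} [Fintype α] [DecidableEq α] [Fintype β] [DecidableEq β]

theorem traceNorm_eq_re_trace_sqrt (A : Matrix α α ℂ) :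
    traceNorm A = (CFC.sqrt (Aᴴ * A)).trace.re := by
  have hA := posSemidef_conjTranspose_mul_self A
  have h : ∀ i, √(max (hA.1.eigenvalues i) 0) = √(hA.1.eigenvalues i) := fun i => by
    rw [max_eq_left (hA.eigenvalues_nonneg i)]
  rw [CFC.sqrt_eq_cfc, cfc_nnreal_eq_real _ _ hA.nonneg, hA.1.cfc_eq, IsHermitian.cfc,
    Unitary.conjStarAlgAut_apply]
  simp [traceNorm, Function.comp_def, Real.coe_toNNReal', h]

theorem traceNorm_eq_of_sq_eq {A S : Matrix α α ℂ} (hS : S.PosSemidef) (hsq : S ^ 2 = Aᴴ * A) :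
    traceNorm A = S.trace.re := by
  rw [traceNorm_eq_re_trace_sqrt, ← CFC.sqrt_unique (by rw [← sq, hsq]) hS.nonneg]

theorem Matrix.IsHermitian.traceNorm_eq_sum_abs_eigenvalues {A : Matrix α α ℂ}
    (hA : A.IsHermitian) : traceNorm A = ∑ i, |hA.eigenvalues i| := by
  set U : Matrix α α ℂ := (hA.eigenvectorUnitary : Matrix α α ℂ)
  have hUU : star U * U = 1 := Unitary.coe_star_mul_self hA.eigenvectorUnitary
  have conj_mul_conj (X Y : Matrix α α ℂ) :
      (U * X * star U) * (U * Y * star U) = U * (X * Y) * star U := by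
    simp only [Matrix.mul_assoc, ← Matrix.mul_assoc (star U), hUU, Matrix.one_mul]
  set D : Matrix α α ℂ := diagonal fun i => ((|hA.eigenvalues i| : ℝ) : ℂ)
  have hD : (U * D * star U).PosSemidef := by
    refine PosSemidef.mul_mul_conjTranspose_same (posSemidef_diagonal_iff.mpr fun i => ?_) _
    exact Complex.zero_le_real.mpr (abs_nonneg _)
  have hsq : (U * D * star U) ^ 2 = Aᴴ * A := by
    rw [sq, hA.eq, conj_mul_conj]
    conv_rhs => rw [hA.spectral_theorem, Unitary.conjStarAlgAut_apply, conj_mul_conj]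
    simp only [D, diagonal_mul_diagonal, Function.comp_apply, RCLike.ofReal_eq_complex_ofReal,
      ← Complex.ofReal_mul, abs_mul_abs_self]
  rw [traceNorm_eq_of_sq_eq hD hsq, trace_mul_cycle, hUU, Matrix.one_mul, trace_diagonal,
    ← Complex.ofReal_sum, Complex.ofReal_re]

theorem Matrix.IsHermitian.sum_abs_re_diag_conj_le_traceNorm {A V : Matrix α α ℂ}
    (hA : A.IsHermitian) (hV : V ∈ unitaryGroup α ℂ) :
    ∑ i, |((star V * A * V) i i).re| ≤ traceNorm A := by
  set W := star V * (hA.eigenvectorUnitary : Matrix α α ℂ)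
  have hW : star W * W = 1 :=
    Unitary.star_mul_self_of_mem (mul_mem (Unitary.star_mem hV) hA.eigenvectorUnitary.2)
  have hcol (j : α) : ∑ i, ‖W i j‖ ^ 2 = 1 := by
    have h := congrFun (congrFun hW j) j
    simp only [mul_apply, star_apply, one_apply_eq, RCLike.star_def, Complex.conj_mul'] at h
    exact_mod_cast h
  have hdiag (i : α) : ((star V * A * V) i i).re = ∑ j, ‖W i j‖ ^ 2 * hA.eigenvalues j := by
    have hconj : star V * A * V = W * diagonal (RCLike.ofReal ∘ hA.eigenvalues) * star W := by
      conv_lhs => rw [hA.spectral_theorem, Unitary.conjStarAlgAut_apply]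
      simp only [W, StarMul.star_mul, star_star, Matrix.mul_assoc]
    rw [hconj, mul_apply, Complex.re_sum]
    refine Finset.sum_congr rfl fun j _ => ?_
    simp only [mul_diagonal, star_apply, Function.comp_apply, RCLike.ofReal_eq_complex_ofReal,
      RCLike.star_def, mul_right_comm _ (Complex.ofReal _), Complex.mul_conj',
      ← Complex.ofReal_pow, ← Complex.ofReal_mul, Complex.ofReal_re]
  calc ∑ i, |((star V * A * V) i i).re|
      ≤ ∑ i, ∑ j, ‖W i j‖ ^ 2 * |hA.eigenvalues j| := by
        refine Finset.sum_le_sum fun i _ => ?_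
        rw [hdiag i]
        refine (Finset.abs_sum_le_sum_abs _ _).trans_eq (Finset.sum_congr rfl fun j _ => ?_)
        rw [abs_mul, abs_of_nonneg (sq_nonneg _)]
    _ = ∑ j, |hA.eigenvalues j| := by
        simp only [Finset.sum_comm (γ := α) (f := fun i j => _ * |hA.eigenvalues j|),
          ← Finset.sum_mul, hcol, one_mul]
    _ = traceNorm A := hA.traceNorm_eq_sum_abs_eigenvalues.symm

theorem traceNorm_add_le {A B : Matrix α α ℂ} (hA : A.IsHermitian) (hB : B.IsHermitian) :
    traceNorm (A + B) ≤ traceNorm A + traceNorm B := by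
  have hAB : (A + B).IsHermitian := hA.add hB
  set V : Matrix α α ℂ := (hAB.eigenvectorUnitary : Matrix α α ℂ)
  have hsplit (i : α) :
      hAB.eigenvalues i = ((star V * A * V) i i).re + ((star V * B * V) i i).re := by
    have h := congrFun (congrFun hAB.conjStarAlgAut_star_eigenvectorUnitary i) i
    rw [Unitary.conjStarAlgAut_star_apply, Matrix.mul_add, Matrix.add_mul] at h
    simpa using (congrArg Complex.re h).symm
  rw [hAB.traceNorm_eq_sum_abs_eigenvalues]
  calc ∑ i, |hAB.eigenvalues i|
      ≤ ∑ i, (|((star V * A * V) i i).re| + |((star V * B * V) i i).re|) :=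
        Finset.sum_le_sum fun i _ => (hsplit i).symm ▸ abs_add_le _ _
    _ ≤ traceNorm A + traceNorm B := by
        rw [Finset.sum_add_distrib]
        exact add_le_add (hA.sum_abs_re_diag_conj_le_traceNorm hAB.eigenvectorUnitary.2)
          (hB.sum_abs_re_diag_conj_le_traceNorm hAB.eigenvectorUnitary.2)

theorem traceNorm_sum_le {ι : Type*} (s : Finset ι) (f : ι → Matrix α α ℂ)
    (hf : ∀ i ∈ s, (f i).IsHermitian) :
    traceNorm (∑ i ∈ s, f i) ≤ ∑ i ∈ s, traceNorm (f i) := by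
  induction s using Finset.cons_induction with
  | empty => simp [traceNorm_eq_of_sq_eq PosSemidef.zero (A := (0 : Matrix α α ℂ)) (by simp [sq])]
  | cons a s ha ih =>
    rw [Finset.forall_mem_cons] at hf
    rw [Finset.sum_cons, Finset.sum_cons]
    exact (traceNorm_add_le hf.1 (isSelfAdjoint_sum s hf.2)).trans (by gcongr; exact ih hf.2)

theorem traceNorm_smul {r : ℝ} (hr : 0 ≤ r) (A : Matrix α α ℂ) :
    traceNorm (r • A) = r * traceNorm A := by
  have hA := posSemidef_conjTranspose_mul_self A
  have hS : (r • CFC.sqrt (Aᴴ * A)).PosSemidef :=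
    (nonneg_iff_posSemidef.mp (CFC.sqrt_nonneg _)).smul hr
  have hsq : (r • CFC.sqrt (Aᴴ * A)) ^ 2 = (r • A)ᴴ * (r • A) := by
    rw [smul_pow, CFC.sq_sqrt _ hA.nonneg, conjTranspose_smul, star_trivial, smul_mul_smul_comm,
      sq]
  rw [traceNorm_eq_of_sq_eq hS hsq, trace_smul, traceNorm_eq_re_trace_sqrt, Complex.real_smul,
    Complex.re_ofReal_mul]

theorem traceNorm_reindex (e : α ≃ β) (A : Matrix α α ℂ) :
    traceNorm (reindex e e A) = traceNorm A := by
  have hS := nonneg_iff_posSemidef.mp (CFC.sqrt_nonneg (Aᴴ * A))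
  have hsq : (reindex e e (CFC.sqrt (Aᴴ * A))) ^ 2 = (reindex e e A)ᴴ * reindex e e A := by
    rw [sq, reindex_apply, reindex_apply, submatrix_mul_equiv,
      CFC.sqrt_mul_sqrt_self _ (posSemidef_conjTranspose_mul_self A).nonneg,
      conjTranspose_submatrix, submatrix_mul_equiv]
  rw [traceNorm_eq_of_sq_eq ((posSemidef_submatrix_equiv e.symm).mpr hS) hsq,
    traceNorm_eq_re_trace_sqrt, trace, trace, ← e.symm.sum_comp]
  rfl

theorem traceNorm_kronecker_of_posSemidef (A : Matrix α α ℂ) {P : Matrix β β ℂ}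
    (hP : P.PosSemidef) : traceNorm (A ⊗ₖ P) = traceNorm A * P.trace.re := by
  have hA := posSemidef_conjTranspose_mul_self A
  have hS := (nonneg_iff_posSemidef.mp (CFC.sqrt_nonneg (Aᴴ * A))).kronecker hP
  have hsq : (CFC.sqrt (Aᴴ * A) ⊗ₖ P) ^ 2 = (A ⊗ₖ P)ᴴ * (A ⊗ₖ P) := by
    rw [sq, ← mul_kronecker_mul, CFC.sqrt_mul_sqrt_self _ hA.nonneg, conjTranspose_kronecker,
      ← mul_kronecker_mul, hP.1.eq]
  have hP_im : P.trace.im = 0 := (Complex.nonneg_iff.mp hP.trace_nonneg).2.symm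
  rw [traceNorm_eq_of_sq_eq hS hsq, trace_kronecker, Complex.mul_re, hP_im, mul_zero, sub_zero,
    traceNorm_eq_re_trace_sqrt]

theorem traceNorm_kronecker_maxMixed [Nonempty β] (X : Matrix α α ℂ) :
    traceNorm (X ⊗ₖ maxMixed β) = traceNorm X := by
  rw [traceNorm_kronecker_of_posSemidef X (posSemidef_maxMixed β), trace_maxMixed β,
    Complex.one_re, mul_one]

end TraceNorm

theorem Fintype.sum_sum_update {ι β M : Type*} [DecidableEq ι] [Fintype ι] [Fintype β]
    [DecidableEq β] [AddCommMonoid M] (w : ι) (f : (ι → β) → M) :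
    ∑ c : β, ∑ z : ι → β, f (Function.update z w c) = Fintype.card β • ∑ z, f z := by
  set e := Equiv.funSplitAt w β
  have hupdate (z : ι → β) (c : β) : Function.update z w c = e.symm (c, (e z).2) := by
    funext j
    rcases eq_or_ne j w with rfl | hj <;> simp [e, Equiv.funSplitAt, Equiv.piSplitAt, *]
  simp_rw [hupdate]
  rw [← e.symm.sum_comp f]
  simp only [← e.symm.sum_comp (fun z => f (e.symm (_, (e z).2))), Equiv.apply_symm_apply,
    Fintype.sum_prod_type, Finset.sum_const, Finset.card_univ, Finset.smul_sum]

noncomputable def fullyDepolarizeAt {ι : Type*} [DecidableEq ι] (w : ι) :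
    Matrix (ι → Fin 2) (ι → Fin 2) ℂ →ₗ[ℂ] Matrix (ι → Fin 2) (ι → Fin 2) ℂ where
  toFun X := Matrix.of fun x y =>
    if x w = y w then (2 : ℂ)⁻¹ * ∑ c : Fin 2, X (Function.update x w c) (Function.update y w c)
    else 0
  map_add' X Y := by
    ext x y
    simp only [of_apply, Matrix.add_apply, Finset.sum_add_distrib]
    split_ifs <;> ring
  map_smul' c X := by
    ext x y
    simp only [of_apply, Matrix.smul_apply, smul_eq_mul, RingHom.id_apply, ← Finset.mul_sum]
    split_ifs <;> ring

theorem depolarizeAt_eq {n : ℕ} (η : ℝ) (i : Fin n) :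
    depolarizeAt η i = (1 - η : ℂ) • LinearMap.id + (η : ℂ) • fullyDepolarizeAt i :=
  LinearMap.ext fun _ => Matrix.ext fun _ _ => rfl

section Qubits

variable {n : ℕ}

theorem ptr_add (A : Finset (Fin n)) (ρ σ : QState n) : ptr A (ρ + σ) = ptr A ρ + ptr A σ := by
  ext x y
  simp [ptr, Finset.sum_add_distrib]

theorem ptr_sub (A : Finset (Fin n)) (ρ σ : QState n) : ptr A (ρ - σ) = ptr A ρ - ptr A σ := by
  ext x y
  simp [ptr, Finset.sum_sub_distrib]

theorem ptr_smul (A : Finset (Fin n)) (c : ℂ) (ρ : QState n) : ptr A (c • ρ) = c • ptr A ρ := by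
  ext x y
  simp [ptr, Finset.mul_sum]

theorem isHermitian_ptr {ρ : QState n} (hρ : ρ.IsHermitian) (A : Finset (Fin n)) :
    (ptr A ρ).IsHermitian := by
  ext x y
  simp only [conjTranspose_apply, ptr, of_apply, star_sum]
  exact Finset.sum_congr rfl fun z _ => by rw [← conjTranspose_apply, hρ.eq]

theorem update_glue_of_mem {A : Finset (Fin n)} (x : A → Fin 2)
    (z : {i : Fin n // i ∉ A} → Fin 2) {i : Fin n} (hi : i ∈ A) (c : Fin 2) :
    Function.update (glue A x z) i c = glue A (Function.update x ⟨i, hi⟩ c) z := by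
  funext j
  by_cases hj : j ∈ A
  · simp [glue, hj, Function.update_apply, Subtype.ext_iff]
  · simp [glue, hj, show j ≠ i by rintro rfl; exact hj hi]

theorem update_glue_of_notMem {A : Finset (Fin n)} (x : A → Fin 2)
    (z : {i : Fin n // i ∉ A} → Fin 2) {i : Fin n} (hi : i ∉ A) (c : Fin 2) :
    Function.update (glue A x z) i c = glue A x (Function.update z ⟨i, hi⟩ c) := by
  funext j
  by_cases hj : j ∈ A
  · simp [glue, hj, show j ≠ i by rintro rfl; exact hi hj]
  · simp [glue, hj, Function.update_apply, Subtype.ext_iff]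

theorem ptr_fullyDepolarizeAt_of_notMem {B : Finset (Fin n)} {i : Fin n} (hi : i ∉ B)
    (ρ : QState n) : ptr B (fullyDepolarizeAt i ρ) = ptr B ρ := by
  ext x y
  simp only [ptr, fullyDepolarizeAt, LinearMap.coe_mk, AddHom.coe_mk, of_apply,
    update_glue_of_notMem _ _ hi, glue, dif_neg hi, if_true, ← Finset.mul_sum]
  rw [Finset.sum_comm, Fintype.sum_sum_update ⟨i, hi⟩ fun z => ρ (glue B x z) (glue B y z)]
  simp

theorem ptr_fullyDepolarizeAt_of_mem {B : Finset (Fin n)} {i : Fin n} (hi : i ∈ B)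
    (ρ : QState n) : ptr B (fullyDepolarizeAt i ρ) = fullyDepolarizeAt ⟨i, hi⟩ (ptr B ρ) := by
  ext x y
  simp only [ptr, fullyDepolarizeAt, LinearMap.coe_mk, AddHom.coe_mk, of_apply,
    update_glue_of_mem _ _ hi, glue, dif_pos hi]
  split_ifs
  · simp only [Finset.mul_sum]
    exact Finset.sum_comm
  · simp

def overwrite (S : Finset (Fin n)) {B : Finset (Fin n)} (x b : B → Fin 2) : B → Fin 2 :=
  fun j => if j.1 ∈ S then b j else x j

@[simp]
theorem overwrite_empty {B : Finset (Fin n)} (x b : B → Fin 2) : overwrite ∅ x b = x := by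
  funext j
  simp [overwrite]

theorem overwrite_update {B S : Finset (Fin n)} {w : B} (hw : w.1 ∉ S) (x b : B → Fin 2)
    (c : Fin 2) :
    overwrite S (Function.update x w c) b = overwrite (insert w.1 S) x (Function.update b w c) := by
  funext j
  rcases eq_or_ne j w with rfl | hj
  · simp [overwrite, hw]
  · have hjw : j.1 ≠ w.1 := fun h => hj (Subtype.ext h)
    simp [overwrite, hj, hjw]

/-- `X ↦ X|_{B ∖ S} ⊗ I / 2^{|S|}`, written as an average over all `b : B → Fin 2` rather than
over the bits of `S`, which would need the subtype of `S`. -/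
noncomputable def fullyDepolarizeOn (B S : Finset (Fin n)) (X : Matrix (B → Fin 2) (B → Fin 2) ℂ) :
    Matrix (B → Fin 2) (B → Fin 2) ℂ :=
  Matrix.of fun x y => if ∀ j : B, j.1 ∈ S → x j = y j then
    (Fintype.card (B → Fin 2) : ℂ)⁻¹ * ∑ b : B → Fin 2, X (overwrite S x b) (overwrite S y b)
    else 0

theorem fullyDepolarizeOn_empty (B : Finset (Fin n)) (X : Matrix (B → Fin 2) (B → Fin 2) ℂ) :
    fullyDepolarizeOn B ∅ X = X := by
  ext x y
  simp [fullyDepolarizeOn]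

theorem fullyDepolarizeAt_fullyDepolarizeOn {B S : Finset (Fin n)} {w : B} (hw : w.1 ∉ S)
    (X : Matrix (B → Fin 2) (B → Fin 2) ℂ) :
    fullyDepolarizeAt w (fullyDepolarizeOn B S X) = fullyDepolarizeOn B (insert w.1 S) X := by
  have hne {j : B} (hj : j.1 ∈ S) : j ≠ w := by rintro rfl; exact hw hj
  ext x y
  have hguard (c : Fin 2) :
      (∀ j : B, j.1 ∈ S → Function.update x w c j = Function.update y w c j) ↔
        ∀ j : B, j.1 ∈ S → x j = y j :=
    forall₂_congr fun j hj => by rw [Function.update_of_ne (hne hj), Function.update_of_ne (hne hj)]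
  have hguard_insert : (∀ j : B, j.1 ∈ insert w.1 S → x j = y j) ↔
      x w = y w ∧ ∀ j : B, j.1 ∈ S → x j = y j := by
    simp only [Finset.mem_insert, or_imp, forall_and]
    exact and_congr_left' ⟨fun h => h w rfl, fun h j hj => (Subtype.ext hj : j = w) ▸ h⟩
  simp only [fullyDepolarizeAt, fullyDepolarizeOn, LinearMap.coe_mk, AddHom.coe_mk, of_apply,
    hguard, overwrite_update hw, hguard_insert]
  by_cases hS : ∀ j : B, j.1 ∈ S → x j = y j
  · simp only [if_pos hS, ← Finset.mul_sum, and_iff_left hS]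
    rw [Fintype.sum_sum_update w
      fun b => X (overwrite (insert w.1 S) x b) (overwrite (insert w.1 S) y b)]
    split_ifs
    · simp only [Fintype.card_fin, nsmul_eq_mul, Nat.cast_ofNat]
      ring
    · rfl
  · simp only [if_neg hS, if_neg (not_and_of_not_right _ hS), Finset.sum_const_zero, mul_zero,
      ite_self]

theorem ptr_foldr_depolarizeAt (η : ℝ) (B : Finset (Fin n)) {l : List (Fin n)} (hl : l.Nodup)
    (ρ : QState n) :
    ptr B ((l.foldr (fun i acc => depolarizeAt η i ∘ₗ acc) LinearMap.id) ρ) =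
      ∑ S ∈ (l.toFinset ∩ B).powerset,
        ((η : ℂ) ^ ((l.toFinset ∩ B).card - S.card) * (1 - η : ℂ) ^ S.card) •
          fullyDepolarizeOn B ((l.toFinset ∩ B) \ S) (ptr B ρ) := by
  induction l with
  | nil => simp [fullyDepolarizeOn_empty]
  | cons i l ih =>
    obtain ⟨hil, hl⟩ := List.nodup_cons.mp hl
    rw [List.foldr_cons, LinearMap.comp_apply, depolarizeAt_eq, LinearMap.add_apply,
      LinearMap.smul_apply, LinearMap.smul_apply, LinearMap.id_apply, ptr_add, ptr_smul, ptr_smul,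
      List.toFinset_cons]
    by_cases hi : i ∈ B
    · set M := l.toFinset ∩ B
      have hiM : i ∉ M := fun h => hil (List.mem_toFinset.mp (Finset.mem_inter.mp h).1)
      rw [ptr_fullyDepolarizeAt_of_mem hi, ih hl, Finset.insert_inter_of_mem hi,
        Finset.sum_powerset_insert hiM, map_sum, Finset.smul_sum, Finset.smul_sum, add_comm]
      congr 1 <;> refine Finset.sum_congr rfl fun S hS => ?_
      · have hSM := Finset.mem_powerset.mp hS
        have hiS : i ∉ M \ S := fun h => hiM (Finset.mem_sdiff.mp h).1
        rw [map_smul, fullyDepolarizeAt_fullyDepolarizeOn (w := ⟨i, hi⟩) hiS, smul_smul,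
          Finset.insert_sdiff_of_notMem _ (fun h => hiM (hSM h)), Finset.card_insert_of_notMem hiM,
          Nat.succ_sub (Finset.card_le_card hSM), pow_succ]
        congr 1
        ring
      · have hSM := Finset.mem_powerset.mp hS
        rw [smul_smul, Finset.insert_sdiff_insert, Finset.sdiff_insert_of_notMem hiM,
          Finset.card_insert_of_notMem hiM, Finset.card_insert_of_notMem (fun h => hiM (hSM h)),
          Nat.succ_sub_succ, pow_succ]
        congr 1
        ring
    · rw [ptr_fullyDepolarizeAt_of_notMem hi, ← add_smul, sub_add_cancel, one_smul, ih hl,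
        Finset.insert_inter_of_notMem hi]

theorem ptr_depolarizeN (η : ℝ) (B : Finset (Fin n)) (ρ : QState n) :
    ptr B (depolarizeN η n ρ) = ∑ A ∈ B.powerset,
      ((η : ℂ) ^ (B.card - A.card) * (1 - η : ℂ) ^ A.card) •
        fullyDepolarizeOn B (B \ A) (ptr B ρ) := by
  simpa only [depolarizeN, List.toFinset_finRange, Finset.univ_inter] using
    ptr_foldr_depolarizeAt η B (List.nodup_finRange n) ρ

theorem sum_sum_glue {M : Type*} [AddCommMonoid M] (A : Finset (Fin n))
    (f : (Fin n → Fin 2) → M) : ∑ x, ∑ z, f (glue A x z) = ∑ w, f w := by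
  rw [← Fintype.sum_prod_type', ← (Equiv.piEquivPiSubtypeProd (· ∈ A) fun _ => Fin 2).symm.sum_comp]
  -- `glue A` is the uncurried inverse of `Equiv.piEquivPiSubtypeProd (· ∈ A)`
  rfl

def splitBits {A B : Finset (Fin n)} (hAB : A ⊆ B) :
    (B → Fin 2) ≃ (A → Fin 2) × ({j : B // j.1 ∉ A} → Fin 2) :=
  (Equiv.piEquivPiSubtypeProd (fun j : B => j.1 ∈ A) fun _ => Fin 2).trans <|
    (Equiv.arrowCongr (Equiv.subtypeSubtypeEquivSubtype fun h => hAB h) (Equiv.refl _)).prodCongr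
      (Equiv.refl _)

theorem glue_overwrite_sdiff {A B : Finset (Fin n)} (hAB : A ⊆ B) (x b : B → Fin 2)
    (z : {i : Fin n // i ∉ B} → Fin 2) :
    glue B (overwrite (B \ A) x b) z = glue A (splitBits hAB x).1 fun j => glue B b z j := by
  funext i
  by_cases hiA : i ∈ A
  · simp only [glue, overwrite, hiA, hAB hiA, Finset.mem_sdiff, not_true_eq_false, and_false,
      dif_pos, if_false]
    rfl
  · by_cases hiB : i ∈ B <;> simp [glue, overwrite, hiA, hiB]

theorem fullyDepolarizeOn_sdiff_ptr {A B : Finset (Fin n)} (hAB : A ⊆ B) (ρ : QState n) :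
    fullyDepolarizeOn B (B \ A) (ptr B ρ) = reindex (splitBits hAB).symm (splitBits hAB).symm
      (ptr A ρ ⊗ₖ maxMixed ({j : B // j.1 ∉ A} → Fin 2)) := by
  set e := splitBits hAB
  have hrestrict (a : A → Fin 2) (u : {i : Fin n // i ∉ A} → Fin 2) :
      (fun j : {i : Fin n // i ∉ A} => glue A a u j) = u :=
    funext fun j => dif_neg j.2
  have hsum (x y : B → Fin 2) :
      ∑ b, ptr B ρ (overwrite (B \ A) x b) (overwrite (B \ A) y b) =
        Fintype.card (A → Fin 2) • ptr A ρ (e x).1 (e y).1 := by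
    simp only [ptr, of_apply, glue_overwrite_sdiff hAB]
    rw [sum_sum_glue B fun w => ρ (glue A (e x).1 fun j => w j) (glue A (e y).1 fun j => w j),
      ← sum_sum_glue A]
    simp only [hrestrict, Finset.sum_const, Finset.card_univ]
  have hguard (x y : B → Fin 2) : (∀ j : B, j.1 ∈ B \ A → x j = y j) ↔ (e x).2 = (e y).2 :=
    ⟨fun h => funext fun j => h j (Finset.mem_sdiff.mpr ⟨j.1.2, j.2⟩),
      fun h j hj => congrFun h ⟨j, (Finset.mem_sdiff.mp hj).2⟩⟩
  have hcard : Fintype.card (B → Fin 2) =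
      Fintype.card (A → Fin 2) * Fintype.card ({j : B // j.1 ∉ A} → Fin 2) := by
    rw [Fintype.card_congr e, Fintype.card_prod]
  ext x y
  simp only [fullyDepolarizeOn, of_apply, hguard, hsum, reindex_apply, submatrix_apply,
    Equiv.symm_symm, kroneckerMap_apply, maxMixed, Matrix.smul_apply, one_apply]
  split_ifs
  · rw [hcard, nsmul_eq_mul, Complex.real_smul, Nat.cast_mul, Complex.ofReal_inv,
      Complex.ofReal_natCast, mul_one, mul_inv]
    field_simp
  · simp

theorem traceNorm_fullyDepolarizeOn_sdiff_ptr {A B : Finset (Fin n)} (hAB : A ⊆ B)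
    (ρ : QState n) : traceNorm (fullyDepolarizeOn B (B \ A) (ptr B ρ)) = traceNorm (ptr A ρ) := by
  rw [fullyDepolarizeOn_sdiff_ptr hAB, traceNorm_reindex, traceNorm_kronecker_maxMixed]

theorem isHermitian_fullyDepolarizeOn_sdiff_ptr {A B : Finset (Fin n)} (hAB : A ⊆ B)
    {ρ : QState n} (hρ : ρ.IsHermitian) : (fullyDepolarizeOn B (B \ A) (ptr B ρ)).IsHermitian := by
  rw [fullyDepolarizeOn_sdiff_ptr hAB]
  exact ((isHermitian_ptr hρ A).kronecker (posSemidef_maxMixed _).1).submatrix _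

end Qubits

/-- After independent depolarization of all `n` qubits, the trace distance of the reduced
states on `B ⊆ [n]` satisfies
`D(E_η^{⊗n}(ρ)|_B, E_η^{⊗n}(σ)|_B) ≤ Σ_{A ⊆ B} η^{|B|-|A|} (1-η)^{|A|} D(ρ|_A, σ|_A)`. -/
theorem traceDist_ptr_depolarizeN_le (η : ℝ) (hη : η ∈ Set.Icc (0 : ℝ) 1) (n : ℕ)
    (ρ σ : QState n) (hρ : IsDensityMatrix ρ) (hσ : IsDensityMatrix σ) (B : Finset (Fin n)) :
    traceDist (ptr B (depolarizeN η n ρ)) (ptr B (depolarizeN η n σ)) ≤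
      ∑ A ∈ B.powerset,
        η ^ (B.card - A.card) * (1 - η) ^ A.card * traceDist (ptr A ρ) (ptr A σ) := by
  set c : Finset (Fin n) → ℝ := fun A => η ^ (B.card - A.card) * (1 - η) ^ A.card
  have hc (A : Finset (Fin n)) : 0 ≤ c A :=
    mul_nonneg (pow_nonneg hη.1 _) (pow_nonneg (sub_nonneg.mpr hη.2) _)
  set Φ : Finset (Fin n) → Matrix (B → Fin 2) (B → Fin 2) ℂ :=
    fun A => fullyDepolarizeOn B (B \ A) (ptr B (ρ - σ))
  have hexpand : ptr B (depolarizeN η n ρ) - ptr B (depolarizeN η n σ) =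
      ∑ A ∈ B.powerset, c A • Φ A := by
    rw [← ptr_sub, ← map_sub, ptr_depolarizeN]
    simp only [c, Φ, RCLike.real_smul_eq_coe_smul (K := ℂ)]
    push_cast
    rfl
  have hΦ {A : Finset (Fin n)} (hA : A ∈ B.powerset) : (c A • Φ A).IsHermitian :=
    (isHermitian_fullyDepolarizeOn_sdiff_ptr (Finset.mem_powerset.mp hA)
      (hρ.1.1.sub hσ.1.1)).smul (IsSelfAdjoint.all _)
  calc traceDist (ptr B (depolarizeN η n ρ)) (ptr B (depolarizeN η n σ))
      ≤ (∑ A ∈ B.powerset, traceNorm (c A • Φ A)) / 2 := by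
        rw [traceDist, hexpand]
        gcongr
        exact traceNorm_sum_le _ _ fun A hA => hΦ hA
    _ = _ := by
        rw [Finset.sum_div]
        refine Finset.sum_congr rfl fun A hA => ?_
        rw [traceNorm_smul (hc A), traceNorm_fullyDepolarizeOn_sdiff_ptr
          (Finset.mem_powerset.mp hA), ptr_sub, traceDist, mul_div_assoc]
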